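/- Let H be a two-dimensional real inner product space, J : H → H a linear isometry satisfying J ∘ J = -id, and A a symmetric bilinear form on H satisfying A(JX, JY) = -A(X, Y) for all X, Y ∈ H. If v ∈ H is a nonzero vector with A(v, v) = 0, then for every orthonormal basis (e₁, e₂) of H one has ‖v‖⁴ · ( Σ_{i,j=1}^{2} A(eᵢ, eⱼ)² ) = 2 · ( A(v, Jv) )². -/

import Mathlib

open scoped RealInnerProductSpace

/-! The sum `∑ i j, A (b i) (b j) ^ 2` does not depend on the orthonormal basis `b`, so it may be
computed in the orthonormal basis `v / ‖v‖, J v / ‖v‖`. There `A` vanishes on the diagonal, since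
`A (J v) (J v) = - A v v = 0`, and both off-diagonal entries equal `A v (J v) / ‖v‖ ^ 2`. -/

section

variable {H : Type*} [NormedAddCommGroup H] [InnerProductSpace ℝ H]

theorem OrthonormalBasis.sum_sq_apply_eq {ι ι' : Type*} [Fintype ι] [Fintype ι']
    (f : H →ₗ[ℝ] ℝ) (b : OrthonormalBasis ι ℝ H) (b' : OrthonormalBasis ι' ℝ H) :
    ∑ i, f (b i) ^ 2 = ∑ i, f (b' i) ^ 2 := by
  have : FiniteDimensional ℝ H := Module.Finite.of_basis b.toBasis
  set w := (InnerProductSpace.toDual ℝ H).symm (LinearMap.toContinuousLinearMap f)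
  have hw : ∀ x, f x = ⟪x, w⟫ := fun x => by
    rw [real_inner_comm, InnerProductSpace.toDual_symm_apply, LinearMap.coe_toContinuousLinearMap']
  simp only [hw, b.sum_sq_inner_right, b'.sum_sq_inner_right]

theorem OrthonormalBasis.sum_sum_sq_apply_apply_eq {ι ι' : Type*} [Fintype ι] [Fintype ι']
    (A : H →ₗ[ℝ] H →ₗ[ℝ] ℝ) (b : OrthonormalBasis ι ℝ H) (b' : OrthonormalBasis ι' ℝ H) :
    ∑ i, ∑ j, A (b i) (b j) ^ 2 = ∑ k, ∑ l, A (b' k) (b' l) ^ 2 :=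
  calc ∑ i, ∑ j, A (b i) (b j) ^ 2
      = ∑ i, ∑ l, A (b i) (b' l) ^ 2 := by
        simp only [b.sum_sq_apply_eq (A _) b']
    _ = ∑ l, ∑ i, A.flip (b' l) (b i) ^ 2 := Finset.sum_comm
    _ = ∑ l, ∑ k, A.flip (b' l) (b' k) ^ 2 := by
        simp only [b.sum_sq_apply_eq (A.flip _) b']
    _ = ∑ k, ∑ l, A (b' k) (b' l) ^ 2 := Finset.sum_comm

theorem LinearIsometry.inner_self_apply_eq_zero {J : H →ₗᵢ[ℝ] H} (hJJ : ∀ x, J (J x) = -x)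
    (x : H) : ⟪x, J x⟫ = 0 := by
  have h := J.inner_map_map x (J x)
  rw [hJJ, inner_neg_right, real_inner_comm] at h
  linarith

theorem LinearIsometry.orthonormal_smul_pair {J : H →ₗᵢ[ℝ] H} (hJJ : ∀ x, J (J x) = -x)
    {v : H} (hv : v ≠ 0) : Orthonormal ℝ ![‖v‖⁻¹ • v, ‖v‖⁻¹ • J v] := by
  have hv' : ‖v‖ ≠ 0 := norm_ne_zero_iff.mpr hv
  rw [orthonormal_iff_ite]
  intro i j
  fin_cases i <;> fin_cases j <;>
    simp [inner_smul_left, inner_smul_right, norm_smul, J.inner_self_apply_eq_zero hJJ,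
      real_inner_comm v (J v), hv']

theorem LinearMap.sum_sum_sq_apply_pair_of_isotropic {A : H →ₗ[ℝ] H →ₗ[ℝ] ℝ}
    (hA : ∀ x y, A x y = A y x) {x y : H} (hx : A x x = 0) (hy : A y y = 0) :
    ∑ i, ∑ j, A (![x, y] i) (![x, y] j) ^ 2 = 2 * A x y ^ 2 := by
  simp only [Fin.sum_univ_two, Matrix.cons_val_zero, Matrix.cons_val_one, hx, hy, hA y x]
  ring

end

theorem stmt4_general {H : Type*} [NormedAddCommGroup H] [InnerProductSpace ℝ H]
    (J : H →ₗ[ℝ] H) (hJiso : ∀ x : H, ‖J x‖ = ‖x‖) (hJJ : ∀ x : H, J (J x) = -x)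
    (A : H →ₗ[ℝ] H →ₗ[ℝ] ℝ) (hAsym : ∀ X Y : H, A X Y = A Y X)
    (hAJ : ∀ X Y : H, A (J X) (J Y) = - A X Y)
    (v : H) (hv : v ≠ 0) (hAv : A v v = 0)
    (b : OrthonormalBasis (Fin 2) ℝ H) :
    ‖v‖ ^ 4 * (∑ i : Fin 2, ∑ j : Fin 2, (A (b i) (b j)) ^ 2) =
      2 * (A v (J v)) ^ 2 := by
  let J' : H →ₗᵢ[ℝ] H := ⟨J, hJiso⟩
  have hon := J'.orthonormal_smul_pair hJJ hv
  let E := (basisOfOrthonormalOfCardEqFinrank hon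
    (by simp [Module.finrank_eq_card_basis b.toBasis])).toOrthonormalBasis (by simpa using hon)
  have hE : ⇑E = ![‖v‖⁻¹ • v, ‖v‖⁻¹ • J v] := by simp [E, J']
  have hAJv : A (J v) (J v) = 0 := by rw [hAJ, hAv, neg_zero]
  rw [b.sum_sum_sq_apply_apply_eq A E, hE,
    LinearMap.sum_sum_sq_apply_pair_of_isotropic hAsym (by simp [hAv]) (by simp [hAJv])]
  have hv' : ‖v‖ ≠ 0 := norm_ne_zero_iff.mpr hv
  simp only [map_smul, LinearMap.smul_apply, smul_eq_mul]
  field_simp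

/-- On a two-dimensional real inner product space `H` with a compatible complex
structure `J` and a symmetric bilinear form `A` of type (2,0)+(0,2), if `v ≠ 0`
and `A(v,v) = 0` then `‖v‖⁴ |A|² = 2 (A(v, Jv))²`, where
`|A|² = Σ_{i,j} A(eᵢ, eⱼ)²` for any orthonormal basis `(e₁, e₂)`. -/
theorem stmt4 {H : Type*} [NormedAddCommGroup H] [InnerProductSpace ℝ H]
    (hdim : Module.finrank ℝ H = 2)
    (J : H →ₗ[ℝ] H) (hJiso : ∀ x : H, ‖J x‖ = ‖x‖) (hJJ : ∀ x : H, J (J x) = -x)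
    (A : H →ₗ[ℝ] H →ₗ[ℝ] ℝ) (hAsym : ∀ X Y : H, A X Y = A Y X)
    (hAJ : ∀ X Y : H, A (J X) (J Y) = - A X Y)
    (v : H) (hv : v ≠ 0) (hAv : A v v = 0)
    (b : OrthonormalBasis (Fin 2) ℝ H) :
    ‖v‖ ^ 4 * (∑ i : Fin 2, ∑ j : Fin 2, (A (b i) (b j)) ^ 2) =
      2 * (A v (J v)) ^ 2 :=
  stmt4_general J hJiso hJJ A hAsym hAJ v hv hAv b
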